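/- Let q = p^v with n = p^u a power of p, and let α ∈ F_{q^n}. Then α is a normal element of F_{q^n} over F_q if and only if Tr(α) ≠ 0, where Tr is the trace from F_{q^n} to F_q. -/

import Mathlib

/-!
Let `φ : x ↦ x ^ q` be the Frobenius, an `F`-linear automorphism of `E`, and `N = φ - 1`. In
characteristic `p` the identity `∑_{i < p ^ u} X ^ i = (X - 1) ^ (p ^ u - 1)` turns the trace
formula `Tr = ∑_{i < n} φ ^ i` into `Tr = N ^ (n - 1)`, while `N ^ n = φ ^ n - 1 = 0`. So if
`Tr α ≠ 0`, the vectors `α, N α, …, N ^ (n - 1) α` are linearly independent; they lie in the span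
of the conjugates `α ^ (q ^ i)`, which is therefore all of `E`. Conversely, the trace is
Galois-invariant and not identically zero, so it cannot vanish at an element whose conjugates
form a basis.
-/

open Module Submodule

theorem Algebra.trace_ne_zero_of_basis_conjugates {K L ι : Type*} [Field K] [Field L]
    [Algebra K L] [FiniteDimensional K L] [Algebra.IsSeparable K L] (b : Basis ι K L) {α : L}
    (hb : ∀ i, ∃ σ : L ≃ₐ[K] L, b i = σ α) : Algebra.trace K L α ≠ 0 := by
  intro hα
  refine Algebra.trace_ne_zero K L (b.ext fun i => ?_)
  obtain ⟨σ, hσ⟩ := hb i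
  rw [hσ, Algebra.trace_eq_of_algEquiv, hα, LinearMap.zero_apply]

namespace Module.End

theorem linearIndependent_pow_apply_of_pow_apply_eq_zero {K V : Type*} [DivisionRing K]
    [AddCommGroup V] [Module K V] (g : Module.End K V) {v : V} {n : ℕ}
    (hv : (g ^ n) v ≠ 0) (hv' : (g ^ (n + 1)) v = 0) :
    LinearIndependent K fun i : Fin (n + 1) => (g ^ (i : ℕ)) v := by
  induction n generalizing v with
  | zero => simpa [LinearIndependent.of_subsingleton] using hv
  | succ n ih =>
    have hshift : ∀ k : ℕ, (g ^ k) (g v) = (g ^ (k + 1)) v := fun k => by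
      rw [pow_succ, mul_apply]
    have htail : LinearIndependent K fun i : Fin (n + 1) => (g ^ ((i : ℕ) + 1)) v := by
      simpa only [hshift] using ih (v := g v) (by rwa [hshift]) (by rwa [hshift])
    have hker : span K (Set.range fun i : Fin (n + 1) => (g ^ ((i : ℕ) + 1)) v) ≤
        LinearMap.ker (g ^ (n + 1)) := by
      refine span_le.mpr ?_
      rintro _ ⟨i, rfl⟩
      rw [SetLike.mem_coe, LinearMap.mem_ker, ← mul_apply, ← pow_add,
        show n + 1 + ((i : ℕ) + 1) = i + (n + 2) by omega, pow_add, mul_apply, hv', map_zero]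
    rw [linearIndependent_finSucc]
    exact ⟨htail, fun hmem => hv (hker hmem)⟩

open Polynomial

variable {K V : Type*} [Field K] [AddCommGroup V] [Module K V]

theorem aeval_apply_mem_span_pow_apply (f : Module.End K V) (v : V) {P : K[X]} {n : ℕ}
    (hP : P.natDegree < n) :
    aeval f P v ∈ span K (Set.range fun i : Fin n => (f ^ (i : ℕ)) v) := by
  rw [aeval_eq_sum_range' hP, LinearMap.sum_apply]
  exact sum_mem fun i hi => smul_mem _ _ (subset_span ⟨⟨i, Finset.mem_range.mp hi⟩, rfl⟩)

theorem exists_basis_pow_apply_of_sub_one_pow (f : Module.End K V) {v : V} {n : ℕ}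
    (hn : finrank K V = n + 1) (hv : ((f - 1) ^ n) v ≠ 0) (hv' : ((f - 1) ^ (n + 1)) v = 0) :
    ∃ b : Basis (Fin (n + 1)) K V, ∀ i, b i = (f ^ (i : ℕ)) v := by
  have hcard : Fintype.card (Fin (n + 1)) = finrank K V := by simp [hn]
  have htop := (linearIndependent_pow_apply_of_pow_apply_eq_zero (f - 1) hv hv')
    |>.span_eq_top_of_card_eq_finrank hcard
  refine ⟨basisOfTopLeSpanOfCardEqFinrank _ (htop.ge.trans (span_le.mpr ?_)) hcard,
    fun i => by rw [coe_basisOfTopLeSpanOfCardEqFinrank]⟩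
  rintro _ ⟨i, rfl⟩
  have hdeg : ((X - 1 : K[X]) ^ (i : ℕ)).natDegree < n + 1 := by
    rw [← C_1, (monic_X_sub_C 1).natDegree_pow, natDegree_X_sub_C, mul_one]
    exact i.2
  simpa using aeval_apply_mem_span_pow_apply f v hdeg

end Module.End

open Polynomial in
theorem Polynomial.sum_range_X_pow_eq_X_sub_one_pow (R : Type*) [CommRing R] (p : ℕ)
    [ExpChar R p] (u : ℕ) : ∑ i ∈ Finset.range (p ^ u), (X : R[X]) ^ i = (X - 1) ^ (p ^ u - 1) := by
  have hmonic : (X - 1 : R[X]).Monic := by simpa using monic_X_sub_C (1 : R)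
  apply hmonic.isRegular.right
  dsimp only
  rw [geom_sum_mul, ← pow_succ, Nat.sub_add_cancel (expChar_pow_pos R p u), sub_pow_expChar_pow,
    one_pow]

namespace FiniteField

open Polynomial

variable (F E : Type*) [Field F] [Fintype F] [Field E] [Algebra F E]

theorem frobeniusAlgHom_toLinearMap_pow_apply (i : ℕ) (x : E) :
    ((frobeniusAlgHom F E).toLinearMap ^ i) x = x ^ Fintype.card F ^ i := by
  rw [Module.End.coe_pow, AlgHom.coe_toLinearMap, coe_frobeniusAlgHom, pow_iterate]

variable [Finite E] (p : ℕ) [ExpChar F p] {u : ℕ}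

theorem algebraMap_trace_eq_frobeniusAlgHom_sub_one_pow_apply (hn : finrank F E = p ^ u)
    (x : E) :
    algebraMap F E (Algebra.trace F E x) =
      (((frobeniusAlgHom F E).toLinearMap - 1) ^ (p ^ u - 1)) x := by
  have h := congr(aeval (frobeniusAlgHom F E).toLinearMap
    $(sum_range_X_pow_eq_X_sub_one_pow F p u))
  simp only [map_sum, map_pow, map_sub, aeval_X, map_one] at h
  rw [← h, LinearMap.sum_apply, algebraMap_trace_eq_sum_pow, hn, Nat.card_eq_fintype_card]
  simp only [frobeniusAlgHom_toLinearMap_pow_apply]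

theorem frobeniusAlgHom_sub_one_pow_eq_zero (hn : finrank F E = p ^ u) :
    ((frobeniusAlgHom F E).toLinearMap - 1) ^ p ^ u = 0 := by
  have h := minpoly.aeval F (frobeniusAlgHom F E).toLinearMap
  rw [minpoly_frobeniusAlgHom, hn, ← one_pow (p ^ u), ← sub_pow_expChar_pow] at h
  simpa using h

end FiniteField

open FiniteField in
theorem normal_iff_trace_ne_zero_general (p v u : ℕ) (hp : p.Prime) (F E : Type) [Field F] [Fintype F]
    [Field E] [Fintype E] [Algebra F E] [CharP F p] (hq : Fintype.card F = p ^ v)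
    (hn : Module.finrank F E = p ^ u) (α : E) :
    (∃ b : Module.Basis (Fin (p ^ u)) F E, ∀ i, b i = α ^ (p ^ v) ^ (i : ℕ)) ↔
      Algebra.trace F E α ≠ 0 := by
  have : ExpChar F p := .prime hp
  constructor
  · rintro ⟨b, hb⟩
    refine Algebra.trace_ne_zero_of_basis_conjugates b fun i =>
      ⟨frobeniusAlgEquivOfAlgebraic F E ^ (i : ℕ), ?_⟩
    rw [hb, AlgEquiv.coe_pow, coe_frobeniusAlgEquivOfAlgebraic_iterate, hq]
  · intro htr
    obtain ⟨m, hm⟩ : ∃ m, p ^ u = m + 1 := Nat.exists_eq_add_one.mpr (pow_pos hp.pos u)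
    have htrace := algebraMap_trace_eq_frobeniusAlgHom_sub_one_pow_apply F E p hn α
    have hnil := frobeniusAlgHom_sub_one_pow_eq_zero F E p hn
    rw [hm, Nat.add_sub_cancel] at htrace
    rw [hm] at hn hnil ⊢
    have hbasis := Module.End.exists_basis_pow_apply_of_sub_one_pow _ hn
      (by rw [← htrace]; exact (map_ne_zero _).mpr htr) (by rw [hnil, LinearMap.zero_apply])
    simpa only [frobeniusAlgHom_toLinearMap_pow_apply, hq] using hbasis

theorem normal_iff_trace_ne_zero (p v u : ℕ) (hp : p.Prime) (F E : Type) [Field F] [Fintype F]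
    [Field E] [Fintype E] [Algebra F E] [CharP F p] (hq : Fintype.card F = p ^ v) (hv : 1 ≤ v)
    (hn : Module.finrank F E = p ^ u) (α : E) :
    (∃ b : Module.Basis (Fin (p ^ u)) F E, ∀ i, b i = α ^ (p ^ v) ^ (i : ℕ)) ↔
      Algebra.trace F E α ≠ 0 :=
  normal_iff_trace_ne_zero_general p v u hp F E hq hn α
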